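/- arXiv:1511.00531 — 2 statements merged into one kernel-verified Lean document; each statement's English description precedes it below -/
import Mathlib

section
/- (Theorem 1, achievability, low-loss regime.) For every γ ∈ (1/√2, 1], the triple Π₀ = |Ψ⁺⟩⟨Ψ⁺| + (γ²−1/2)(|Φ⁺⟩⟨Φ⁺| + |Φ⁻⟩⟨Φ⁻|), Π₁ = |Ψ⁻⟩⟨Ψ⁻| + (γ²−1/2)(|Φ⁺⟩⟨Φ⁺| + |Φ⁻⟩⟨Φ⁻|), Π_∅ = 2(1−γ²)(|Φ⁺⟩⟨Φ⁺| + |Φ⁻⟩⟨Φ⁻|) is γ-admissible and attains V = (1/2)·Tr[ρ₀Π₀ + ρ₁Π₁] = (2γ² + 1/√2)/4. -/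
open Matrix Complex Kronecker BigOperators ComplexOrder

noncomputable section

abbrev Mat2 := Matrix (Fin 2) (Fin 2) ℂ
abbrev Mat4 := Matrix (Fin 2 × Fin 2) (Fin 2 × Fin 2) ℂ

/-- Pauli X matrix -/
def PX : Mat2 := !![0, 1; 1, 0]

/-- Pauli Y matrix -/
def PY : Mat2 := !![0, -Complex.I; Complex.I, 0]

/-- sign (−1)^b for a bit b -/
def bsign (b : Bool) : ℂ := if b then -1 else 1

/-- boolean function f(x̄,ȳ) = (x₁·y₁) XOR x₂ XOR y₂ -/
def fxy (x y : Bool × Bool) : Bool := (((x.1 && y.1)).xor x.2).xor y.2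

/-- qubit input states ω_{x̄}: ω_{(0,x₂)} = (I+(−1)^{x₂}X)/2, ω_{(1,x₂)} = (I+(−1)^{x₂}Y)/2 -/
def omg (x : Bool × Bool) : Mat2 :=
  (1/2 : ℂ) • ((1 : Mat2) + bsign x.2 • (if x.1 then PY else PX))

/-- qubit input states τ_{ȳ} = (I+(−1)^{y₂}(X+(−1)^{y₁}Y)/√2)/2 -/
def tau (y : Bool × Bool) : Mat2 :=
  (1/2 : ℂ) • ((1 : Mat2) + (bsign y.2 / (Real.sqrt 2 : ℂ)) • (PX + bsign y.1 • PY))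

/-- averaged input states ρ₀ (for c = false) and ρ₁ (for c = true) -/
def rho (c : Bool) : Mat4 :=
  (1/8 : ℂ) • ∑ x : Bool × Bool, ∑ y : Bool × Bool,
    (if fxy x y = c then omg x ⊗ₖ tau y else 0)

/-- standard basis vectors of ℂ⁴ ≅ ℂ² ⊗ ℂ² -/
def ket (i j : Fin 2) : (Fin 2 × Fin 2) → ℂ := fun p => if p = (i, j) then 1 else 0

def PhiP : (Fin 2 × Fin 2) → ℂ := fun p => (1 / (Real.sqrt 2 : ℂ)) * (ket 0 0 p + ket 1 1 p)
def PhiM : (Fin 2 × Fin 2) → ℂ := fun p => (1 / (Real.sqrt 2 : ℂ)) * (ket 0 0 p - ket 1 1 p)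
def PsiP : (Fin 2 × Fin 2) → ℂ := fun p => (1 / (Real.sqrt 2 : ℂ)) * (ket 0 1 p + ket 1 0 p)
def PsiM : (Fin 2 × Fin 2) → ℂ := fun p => (1 / (Real.sqrt 2 : ℂ)) * (ket 0 1 p - ket 1 0 p)

/-- rank one projector |v⟩⟨v| -/
def proj (v : (Fin 2 × Fin 2) → ℂ) : Mat4 := Matrix.vecMulVec v (star v)

/-- a γ-admissible measurement triple -/
def Admissible (γ : ℝ) (P0 P1 Pe : Mat4) : Prop :=
  P0.PosSemidef ∧ P1.PosSemidef ∧ Pe.PosSemidef ∧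
  P0 + P1 + Pe = 1 ∧
  ∀ x y : Bool × Bool, ((omg x ⊗ₖ tau y) * Pe).trace = 1 - (γ : ℂ)^2

/-- guessing value V = (1/2)·Tr[ρ₀Π₀ + ρ₁Π₁] (a real number) -/
def Gval (P0 P1 : Mat4) : ℝ := (1/2) * ((rho false * P0 + rho true * P1).trace).re

/-!
Averaging over the inputs, `ρ_c = I/4 + (-1)^c (X⊗X + Y⊗Y) / (8√2)`, and `X⊗X + Y⊗Y` is
diagonal in the Bell basis with eigenvalues `2, -2, 0, 0` on `Ψ⁺, Ψ⁻, Φ⁺, Φ⁻`. So each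
`Tr[ρ_c |b⟩⟨b|]` is read off an eigenvalue, which gives `V`. For admissibility,
`|Φ⁺⟩⟨Φ⁺| + |Φ⁻⟩⟨Φ⁻| = |00⟩⟨00| + |11⟩⟨11|` only sees the diagonal of `ω ⊗ τ`, which is
constantly `1/4`, so every input state is lost with probability `2(1-γ²) · 1/2 = 1-γ²`.
-/

lemma inv_sqrt_two_mul_self : ((Real.sqrt 2 : ℂ))⁻¹ * (Real.sqrt 2 : ℂ)⁻¹ = 1 / 2 := by
  rw [← mul_inv, ← Complex.ofReal_mul, Real.mul_self_sqrt zero_le_two, Complex.ofReal_ofNat,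
    one_div]

lemma PsiP_dotProduct_star : PsiP ⬝ᵥ star PsiP = 1 := by
  norm_num [dotProduct, Fintype.sum_prod_type, PsiP, ket, inv_sqrt_two_mul_self]

lemma PsiM_dotProduct_star : PsiM ⬝ᵥ star PsiM = 1 := by
  norm_num [dotProduct, Fintype.sum_prod_type, PsiM, ket, inv_sqrt_two_mul_self]

lemma PhiP_dotProduct_star : PhiP ⬝ᵥ star PhiP = 1 := by
  norm_num [dotProduct, Fintype.sum_prod_type, PhiP, ket, inv_sqrt_two_mul_self]

lemma PhiM_dotProduct_star : PhiM ⬝ᵥ star PhiM = 1 := by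
  norm_num [dotProduct, Fintype.sum_prod_type, PhiM, ket, inv_sqrt_two_mul_self]

lemma sum_proj_bell_eq_one : proj PsiP + proj PsiM + (proj PhiP + proj PhiM) = 1 := by
  ext ⟨a, b⟩ ⟨c, d⟩
  fin_cases a <;> fin_cases b <;> fin_cases c <;> fin_cases d <;>
    norm_num [proj, vecMulVec_apply, PsiP, PsiM, PhiP, PhiM, ket, one_apply,
      inv_sqrt_two_mul_self]

lemma trace_kronecker_mul_proj_PhiP_add_proj_PhiM (A B : Mat2) :
    ((A ⊗ₖ B) * (proj PhiP + proj PhiM)).trace = A 0 0 * B 0 0 + A 1 1 * B 1 1 := by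
  norm_num [proj, vecMulVec_apply, PhiP, PhiM, ket, trace, mul_apply, Fintype.sum_prod_type,
    inv_sqrt_two_mul_self]

lemma omg_apply_self (x : Bool × Bool) (i : Fin 2) : omg x i i = 1 / 2 := by
  rcases x with ⟨_ | _, _⟩ <;> fin_cases i <;> simp [omg, PX, PY]

lemma tau_apply_self (y : Bool × Bool) (i : Fin 2) : tau y i i = 1 / 2 := by
  fin_cases i <;> simp [tau, PX, PY]

def xxPlusYY : Mat4 := PX ⊗ₖ PX + PY ⊗ₖ PY

/-- The terms with a single Pauli factor cancel: for fixed `x₁, y₁`, flipping `x₂` flips the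
`y₂` allowed by `f = c`. -/
lemma rho_eq (c : Bool) :
    rho c = (1 / 4 : ℂ) • 1 + (bsign c / (8 * Real.sqrt 2 : ℂ)) • xxPlusYY := by
  cases c <;>
  simp only [rho, Fintype.sum_prod_type, Fintype.sum_bool, fxy, omg, tau, xxPlusYY, bsign,
      Bool.and_true, Bool.and_false, Bool.xor_true, Bool.xor_false, Bool.not_true, Bool.not_false,
      Bool.true_eq_false, Bool.false_eq_true, if_true, if_false, add_kronecker, kronecker_add,
      smul_kronecker, kronecker_smul, one_kronecker_one] <;>
  module

lemma xxPlusYY_mulVec_PsiP : xxPlusYY *ᵥ PsiP = (2 : ℂ) • PsiP := by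
  ext ⟨a, b⟩
  fin_cases a <;> fin_cases b <;>
    simp [xxPlusYY, PX, PY, mulVec, dotProduct, Fintype.sum_prod_type, PsiP, ket] <;> ring_nf

lemma xxPlusYY_mulVec_PsiM : xxPlusYY *ᵥ PsiM = (-2 : ℂ) • PsiM := by
  ext ⟨a, b⟩
  fin_cases a <;> fin_cases b <;>
    simp [xxPlusYY, PX, PY, mulVec, dotProduct, Fintype.sum_prod_type, PsiM, ket] <;> ring_nf

lemma xxPlusYY_mulVec_PhiP : xxPlusYY *ᵥ PhiP = (0 : ℂ) • PhiP := by
  ext ⟨a, b⟩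
  fin_cases a <;> fin_cases b <;>
    simp [xxPlusYY, PX, PY, mulVec, dotProduct, Fintype.sum_prod_type, PhiP, ket]

lemma xxPlusYY_mulVec_PhiM : xxPlusYY *ᵥ PhiM = (0 : ℂ) • PhiM := by
  ext ⟨a, b⟩
  fin_cases a <;> fin_cases b <;>
    simp [xxPlusYY, PX, PY, mulVec, dotProduct, Fintype.sum_prod_type, PhiM, ket]

lemma trace_mul_proj (M : Mat4) (v : Fin 2 × Fin 2 → ℂ) :
    (M * proj v).trace = (M *ᵥ v) ⬝ᵥ star v := by
  rw [proj, mul_vecMulVec, trace_vecMulVec]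

lemma trace_rho_mul_proj (c : Bool) {v : Fin 2 × Fin 2 → ℂ} {μ : ℂ} (hv : v ⬝ᵥ star v = 1)
    (hμ : xxPlusYY *ᵥ v = μ • v) :
    (rho c * proj v).trace = 1 / 4 + bsign c * μ / (8 * Real.sqrt 2) := by
  rw [trace_mul_proj, rho_eq, add_mulVec, smul_mulVec, smul_mulVec, one_mulVec, hμ,
    add_dotProduct, smul_dotProduct, smul_dotProduct, smul_dotProduct, hv]
  simp only [smul_eq_mul]
  ring

lemma Gval_proj_Psi_add_smul_proj_Phi (a : ℝ) :
    Gval (proj PsiP + a • (proj PhiP + proj PhiM)) (proj PsiM + a • (proj PhiP + proj PhiM))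
      = 1 / 4 + 1 / (4 * Real.sqrt 2) + a / 2 := by
  have htrace : (rho false * (proj PsiP + a • (proj PhiP + proj PhiM))
      + rho true * (proj PsiM + a • (proj PhiP + proj PhiM))).trace
      = ((1 / 2 + 1 / (2 * Real.sqrt 2) + a : ℝ) : ℂ) := by
    simp only [Matrix.mul_add, Matrix.mul_smul, trace_add, trace_smul,
      trace_rho_mul_proj _ PsiP_dotProduct_star xxPlusYY_mulVec_PsiP,
      trace_rho_mul_proj _ PsiM_dotProduct_star xxPlusYY_mulVec_PsiM,
      trace_rho_mul_proj _ PhiP_dotProduct_star xxPlusYY_mulVec_PhiP,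
      trace_rho_mul_proj _ PhiM_dotProduct_star xxPlusYY_mulVec_PhiM, bsign, Complex.real_smul]
    push_cast
    ring
  rw [Gval, htrace, Complex.ofReal_re]
  ring

/-- achievability, low-loss regime: for γ ∈ (1/√2, 1], the stated triple
is γ-admissible and attains V = (2γ² + 1/√2)/4. -/
theorem guessing_achievable_low_loss (γ : ℝ) (hγ : 1/Real.sqrt 2 < γ) (hγ' : γ ≤ 1) :
    Admissible γ
      (proj PsiP + (γ^2 - 1/2 : ℝ) • (proj PhiP + proj PhiM))
      (proj PsiM + (γ^2 - 1/2 : ℝ) • (proj PhiP + proj PhiM))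
      ((2*(1 - γ^2) : ℝ) • (proj PhiP + proj PhiM)) ∧
    Gval (proj PsiP + (γ^2 - 1/2 : ℝ) • (proj PhiP + proj PhiM))
         (proj PsiM + (γ^2 - 1/2 : ℝ) • (proj PhiP + proj PhiM))
      = (2*γ^2 + 1/Real.sqrt 2)/4 := by
  have hproj (v : Fin 2 × Fin 2 → ℂ) : (proj v).PosSemidef := posSemidef_vecMulVec_self_star v
  have hPhi : (proj PhiP + proj PhiM).PosSemidef := (hproj PhiP).add (hproj PhiM)
  have hsq : (1 / Real.sqrt 2) ^ 2 = 1 / 2 := by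
    rw [div_pow, Real.sq_sqrt zero_le_two, one_pow]
  have hlow : 0 ≤ γ ^ 2 - 1 / 2 := by
    nlinarith [pow_lt_pow_left₀ hγ (by positivity) two_ne_zero]
  have hhigh : 0 ≤ 2 * (1 - γ ^ 2) := by nlinarith [(lt_trans (by positivity) hγ : 0 < γ)]
  refine ⟨⟨(hproj PsiP).add (hPhi.smul hlow), (hproj PsiM).add (hPhi.smul hlow),
    hPhi.smul hhigh, ?_, fun x y => ?_⟩, ?_⟩
  · rw [← sum_proj_bell_eq_one]
    module
  · rw [Matrix.mul_smul, trace_smul, trace_kronecker_mul_proj_PhiP_add_proj_PhiM]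
    simp only [omg_apply_self, tau_apply_self, Complex.real_smul]
    push_cast
    ring
  · rw [Gval_proj_Psi_add_smul_proj_Phi]
    ring
end
end

section
/- (Tsirelson-type bound.) For every γ ∈ (0,1] and every γ-admissible triple (Π₀,Π₁,Π_∅), the normalized guessing probability satisfies V/γ² ≤ 1/2 + 1/(2√2); equivalently, the postselected Bell value S = 8·(V/γ² − 1/2) never exceeds 2√2. -/
open Matrix Complex Kronecker BigOperators ComplexOrder

noncomputable section

/-!
Since the sixteen product states sum to `4 • 1`, one has `ρ₀ + ρ₁ = 1/2`, and averaging the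
admissibility condition gives `Tr (Π₀ + Π₁) = 4γ²`. On the other side,
`ρ₀ - ρ₁ = (√2/8)(X ⊗ X + Y ⊗ Y) = (√2/4)(|Ψ⁺⟩⟨Ψ⁺| - |Ψ⁻⟩⟨Ψ⁻|)`, so
`V = Tr (Π₀ + Π₁) / 8 + (√2/16) Tr [(|Ψ⁺⟩⟨Ψ⁺| - |Ψ⁻⟩⟨Ψ⁻|)(Π₀ - Π₁)]`.
The operator `|Ψ⁺⟩⟨Ψ⁺| - |Ψ⁻⟩⟨Ψ⁻|` lies between `-1` and `1`, hence the last trace is at most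
`Tr (Π₀ + Π₁)`, and `V ≤ (1/2 + √2/4) γ²`.
-/

namespace Matrix

section Trace

variable {n 𝕜 : Type*} [Fintype n] [RCLike 𝕜]

theorem PosSemidef.trace_mul_nonneg {A B : Matrix n n 𝕜} (hA : A.PosSemidef)
    (hB : B.PosSemidef) : 0 ≤ (A * B).trace := by
  classical
  open scoped MatrixOrder Matrix.Norms.L2Operator in
  obtain ⟨C, rfl⟩ := CStarAlgebra.nonneg_iff_eq_star_mul_self.mp hA.nonneg
  rw [star_eq_conjTranspose, Matrix.mul_assoc, trace_mul_comm]
  exact (hB.mul_mul_conjTranspose_same C).trace_nonneg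

theorem re_trace_mul_sub_le_re_trace_add [DecidableEq n] {A P Q : Matrix n n 𝕜}
    (hA₁ : (1 - A).PosSemidef) (hA₂ : (1 + A).PosSemidef) (hP : P.PosSemidef)
    (hQ : Q.PosSemidef) : RCLike.re (A * (P - Q)).trace ≤ RCLike.re (P + Q).trace := by
  have hAP := RCLike.re_le_re (hA₁.trace_mul_nonneg hP)
  have hAQ := RCLike.re_le_re (hA₂.trace_mul_nonneg hQ)
  simp only [Matrix.sub_mul, Matrix.add_mul, Matrix.mul_sub, Matrix.one_mul, trace_sub,
    trace_add, map_sub, map_add, map_zero] at hAP hAQ ⊢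
  linarith

end Trace

section Kronecker

variable {l m n p α : Type*} [Ring α]

theorem neg_kronecker (A : Matrix l m α) (B : Matrix n p α) : (-A) ⊗ₖ B = -(A ⊗ₖ B) := by
  ext; simp [kroneckerMap_apply]

theorem kronecker_neg (A : Matrix l m α) (B : Matrix n p α) : A ⊗ₖ (-B) = -(A ⊗ₖ B) := by
  ext; simp [kroneckerMap_apply]

end Kronecker

end Matrix

theorem sum_omg_kronecker_tau :
    ∑ x : Bool × Bool, ∑ y : Bool × Bool, omg x ⊗ₖ tau y = (4 : ℂ) • (1 : Mat4) := by
  simp [Fintype.sum_prod_type, omg, tau, bsign, smul_kronecker, kronecker_smul, add_kronecker,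
    kronecker_add, neg_kronecker, kronecker_neg]
  module

theorem sum_bsign_fxy_smul_omg_kronecker_tau :
    ∑ x : Bool × Bool, ∑ y : Bool × Bool, bsign (fxy x y) • omg x ⊗ₖ tau y
      = (2 / (Real.sqrt 2 : ℂ)) • (PX ⊗ₖ PX + PY ⊗ₖ PY) := by
  simp [Fintype.sum_prod_type, omg, tau, bsign, fxy, smul_kronecker, kronecker_smul,
    add_kronecker, kronecker_add, neg_kronecker, kronecker_neg]
  module

theorem pX_kronecker_pX_add_pY_kronecker_pY :
    PX ⊗ₖ PX + PY ⊗ₖ PY = (2 : ℂ) • (proj PsiP - proj PsiM) := by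
  ext ⟨i, j⟩ ⟨k, l⟩
  fin_cases i <;> fin_cases j <;> fin_cases k <;> fin_cases l <;>
    simp [PX, PY, proj, vecMulVec_apply, PsiP, PsiM, ket, Complex.ext_iff] <;>
    ring_nf <;> norm_num

theorem proj_phiP_add_proj_phiM_add_proj_psiP_add_proj_psiM :
    proj PhiP + proj PhiM + proj PsiP + proj PsiM = 1 := by
  ext ⟨i, j⟩ ⟨k, l⟩
  fin_cases i <;> fin_cases j <;> fin_cases k <;> fin_cases l <;>
    simp [proj, vecMulVec_apply, PhiP, PhiM, PsiP, PsiM, ket, one_apply, Complex.ext_iff] <;>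
    ring_nf <;> norm_num

theorem posSemidef_one_sub_proj_psiP_sub_proj_psiM :
    (1 - (proj PsiP - proj PsiM)).PosSemidef := by
  rw [← proj_phiP_add_proj_phiM_add_proj_psiP_add_proj_psiM,
    show ∀ a b c d : Mat4, a + b + c + d - (c - d) = a + b + d + d by intros; abel]
  exact (((posSemidef_vecMulVec_self_star _).add (posSemidef_vecMulVec_self_star _)).add
    (posSemidef_vecMulVec_self_star _)).add (posSemidef_vecMulVec_self_star _)

theorem posSemidef_one_add_proj_psiP_sub_proj_psiM :
    (1 + (proj PsiP - proj PsiM)).PosSemidef := by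
  rw [← proj_phiP_add_proj_phiM_add_proj_psiP_add_proj_psiM,
    show ∀ a b c d : Mat4, a + b + c + d + (c - d) = a + b + c + c by intros; abel]
  exact (((posSemidef_vecMulVec_self_star _).add (posSemidef_vecMulVec_self_star _)).add
    (posSemidef_vecMulVec_self_star _)).add (posSemidef_vecMulVec_self_star _)

theorem rho_false_add_rho_true : rho false + rho true = (1 / 2 : ℂ) • 1 := by
  have hsum : rho false + rho true
      = (1 / 8 : ℂ) • ∑ x : Bool × Bool, ∑ y : Bool × Bool, omg x ⊗ₖ tau y := by
    simp only [rho, ← smul_add, ← Finset.sum_add_distrib]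
    congr! 3 with x _ y _
    cases fxy x y <;> simp
  rw [hsum, sum_omg_kronecker_tau, smul_smul]
  norm_num

theorem rho_false_sub_rho_true :
    rho false - rho true = ((Real.sqrt 2 : ℂ) / 4) • (proj PsiP - proj PsiM) := by
  have hsum : rho false - rho true
      = (1 / 8 : ℂ) • ∑ x : Bool × Bool, ∑ y : Bool × Bool, bsign (fxy x y) • omg x ⊗ₖ tau y := by
    simp only [rho, ← smul_sub, ← Finset.sum_sub_distrib]
    congr! 3 with x _ y _
    cases fxy x y <;> simp [bsign]
  rw [hsum, sum_bsign_fxy_smul_omg_kronecker_tau, pX_kronecker_pX_add_pY_kronecker_pY,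
    smul_smul, smul_smul]
  congr 1
  field_simp
  norm_cast
  norm_num

theorem gval_eq (P0 P1 : Mat4) :
    Gval P0 P1 = (P0 + P1).trace.re / 8
      + Real.sqrt 2 / 16 * ((proj PsiP - proj PsiM) * (P0 - P1)).trace.re := by
  have hdecomp : (2 : ℂ) • (rho false * P0 + rho true * P1)
      = (rho false + rho true) * (P0 + P1) + (rho false - rho true) * (P0 - P1) := by
    simp only [two_smul, add_mul, mul_add, sub_mul, mul_sub]
    abel
  rw [rho_false_add_rho_true, rho_false_sub_rho_true, smul_mul_assoc, smul_mul_assoc, one_mul]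
    at hdecomp
  have htrace := congrArg (fun M : Mat4 => M.trace.re) hdecomp
  rw [Gval]
  simp only [trace_add, trace_smul, smul_eq_mul, Complex.add_re, Complex.mul_re] at htrace ⊢
  norm_num at htrace
  linarith

theorem Admissible.trace_add {γ : ℝ} {P0 P1 Pe : Mat4} (h : Admissible γ P0 P1 Pe) :
    (P0 + P1).trace = 4 * (γ : ℂ) ^ 2 := by
  obtain ⟨-, -, -, hsum, hPe⟩ := h
  have htracePe : Pe.trace = 4 * (1 - (γ : ℂ) ^ 2) := by
    have := congrArg (fun M : Mat4 => (M * Pe).trace) sum_omg_kronecker_tau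
    simp only [Finset.sum_mul, trace_sum, hPe, Finset.sum_const, Finset.card_univ,
      smul_mul_assoc, one_mul, trace_smul, smul_eq_mul] at this
    norm_num at this
    exact this.symm
  rw [show P0 + P1 = 1 - Pe by rw [← hsum]; abel, trace_sub, trace_one]
  norm_num
  linear_combination -htracePe

theorem tsirelson_type_bound_general (γ : ℝ) (hγ : 0 < γ)
    (P0 P1 Pe : Mat4) (h : Admissible γ P0 P1 Pe) :
    Gval P0 P1 / γ^2 ≤ 1/2 + 1/(2*Real.sqrt 2) ∧
    8 * (Gval P0 P1 / γ^2 - 1/2) ≤ 2*Real.sqrt 2 := by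
  have htrace : (P0 + P1).trace.re = 4 * γ ^ 2 := by
    rw [h.trace_add]
    norm_cast
  have hbell : Real.sqrt 2 * ((proj PsiP - proj PsiM) * (P0 - P1)).trace.re
      ≤ Real.sqrt 2 * (P0 + P1).trace.re :=
    mul_le_mul_of_nonneg_left (re_trace_mul_sub_le_re_trace_add
      posSemidef_one_sub_proj_psiP_sub_proj_psiM posSemidef_one_add_proj_psiP_sub_proj_psiM
      h.1 h.2.1) (Real.sqrt_nonneg 2)
  have hbound : Gval P0 P1 / γ ^ 2 ≤ 1 / 2 + Real.sqrt 2 / 4 := by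
    rw [div_le_iff₀ (by positivity), gval_eq, htrace]
    rw [htrace] at hbell
    linarith
  have hsqrt : 1 / (2 * Real.sqrt 2) = Real.sqrt 2 / 4 := by
    field_simp
    norm_num
  exact ⟨hsqrt ▸ hbound, by linarith⟩

/-- Tsirelson-type bound: for every γ ∈ (0,1] and every γ-admissible
triple, V/γ² ≤ 1/2 + 1/(2√2); equivalently S = 8(V/γ² − 1/2) ≤ 2√2. -/
theorem tsirelson_type_bound (γ : ℝ) (hγ : 0 < γ) (hγ' : γ ≤ 1)
    (P0 P1 Pe : Mat4) (h : Admissible γ P0 P1 Pe) :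
    Gval P0 P1 / γ^2 ≤ 1/2 + 1/(2*Real.sqrt 2) ∧
    8 * (Gval P0 P1 / γ^2 - 1/2) ≤ 2*Real.sqrt 2 :=
  tsirelson_type_bound_general γ hγ P0 P1 Pe h
end
end
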